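/- Let R_1, …, R_n be pairwise disjoint closed axis-aligned rectangles contained in the boundary B, and let an escape assignment choose for each R_i a direction whose escape path is disjoint from every other rectangle R_j (j ≠ i) of the family. Then every point of B lies in at most 2 of the chosen escape paths; that is, the assignment has density at most 2 (routing a one-level instance is a 2-approximation). -/

import Mathlib

/-- One of the four axis-aligned escape directions. -/
inductive Dir | left | right | up | down
deriving DecidableEq

instance : Fintype Dir :=
  ⟨{Dir.left, Dir.right, Dir.up, Dir.down}, by intro x; cases x <;> simp⟩

/-- A closed axis-aligned rectangle `[xmin,xmax] × [ymin,ymax]`. -/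
structure Rect where
  xmin : ℝ
  xmax : ℝ
  ymin : ℝ
  ymax : ℝ

/-- The point set of a rectangle. -/
def Rect.pts (r : Rect) : Set (ℝ × ℝ) :=
  {p | r.xmin ≤ p.1 ∧ p.1 ≤ r.xmax ∧ r.ymin ≤ p.2 ∧ p.2 ≤ r.ymax}

/-- The rectangle is a genuine (nonempty) closed rectangle. -/
def Rect.proper (r : Rect) : Prop := r.xmin ≤ r.xmax ∧ r.ymin ≤ r.ymax

/-- The boundary box `B = [0,W] × [0,H]`. -/
def boundaryBox (W H : ℝ) : Set (ℝ × ℝ) := {p | 0 ≤ p.1 ∧ p.1 ≤ W ∧ 0 ≤ p.2 ∧ p.2 ≤ H}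

/-- The rectangle is contained in the boundary box `[0,W] × [0,H]`. -/
def Rect.inB (W H : ℝ) (r : Rect) : Prop :=
  0 ≤ r.xmin ∧ r.xmax ≤ W ∧ 0 ≤ r.ymin ∧ r.ymax ≤ H

/-- The escape path of a rectangle in a given direction, inside `[0,W] × [0,H]`. -/
def Rect.escape (W H : ℝ) (r : Rect) : Dir → Set (ℝ × ℝ)
  | Dir.right => {p | r.xmin ≤ p.1 ∧ p.1 ≤ W ∧ r.ymin ≤ p.2 ∧ p.2 ≤ r.ymax}
  | Dir.left  => {p | 0 ≤ p.1 ∧ p.1 ≤ r.xmax ∧ r.ymin ≤ p.2 ∧ p.2 ≤ r.ymax}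
  | Dir.up    => {p | r.xmin ≤ p.1 ∧ p.1 ≤ r.xmax ∧ r.ymin ≤ p.2 ∧ p.2 ≤ H}
  | Dir.down  => {p | r.xmin ≤ p.1 ∧ p.1 ≤ r.xmax ∧ 0 ≤ p.2 ∧ p.2 ≤ r.ymax}

/-- Density at point `p` of the escape assignment `σ` restricted to the subfamily `S`. -/
noncomputable def density {n : ℕ} (W H : ℝ) (R : Fin n → Rect) (S : Set (Fin n))
    (σ : Fin n → Dir) (p : ℝ × ℝ) : ℕ :=
  {i | i ∈ S ∧ p ∈ (R i).escape W H (σ i)}.ncard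

/-- The optimal (minimum over assignments of the maximum over points of `B`) density of
the subfamily `S`. -/
noncomputable def optDensity {n : ℕ} (W H : ℝ) (R : Fin n → Rect) (S : Set (Fin n)) : ℕ :=
  sInf {k | ∃ σ : Fin n → Dir, ∀ p ∈ boundaryBox W H, density W H R S σ p ≤ k}

/-- `R j` blocks `R i` in direction `α`. -/
def blocks {n : ℕ} (W H : ℝ) (R : Fin n → Rect) (α : Dir) (j i : Fin n) : Prop :=
  j ≠ i ∧ ¬ Disjoint (R j).pts ((R i).escape W H α)

/-- `R i` is free in direction `α` within the subfamily `S`: no other rectangle of `S`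
blocks it in direction `α`. -/
def free {n : ℕ} (W H : ℝ) (R : Fin n → Rect) (S : Set (Fin n)) (i : Fin n) (α : Dir) : Prop :=
  ∀ j ∈ S, j ≠ i → Disjoint ((R i).escape W H α) (R j).pts

/-- `peel W H R ℓ` is the set of indices remaining after removing peeling levels `1,…,ℓ`. -/
def peel {n : ℕ} (W H : ℝ) (R : Fin n → Rect) : ℕ → Set (Fin n)
  | 0 => Set.univ
  | ℓ + 1 => {i ∈ peel W H R ℓ | ¬ ∃ α, free W H R (peel W H R ℓ) i α}

/-- The peeling level of rectangle `R i` (the least `ℓ` at which it has been removed). -/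
noncomputable def levelOf {n : ℕ} (W H : ℝ) (R : Fin n → Rect) (i : Fin n) : ℕ :=
  sInf {ℓ | i ∉ peel W H R ℓ}

/-- The number `ρ` of nonempty peeling levels. -/
noncomputable def numLevels {n : ℕ} (W H : ℝ) (R : Fin n → Rect) : ℕ :=
  sInf {ℓ | peel W H R ℓ = ∅}

/-!
At a point `p` at most one horizontal and at most one vertical escape path can pass. For two
horizontal paths through `p`, cut along the line `y = p.2`: the two rectangles meet it in disjoint
intervals `[a, b]` left of `[c, d]`, and according to the directions either the path of the left
rectangle contains `c`, or that of the right one contains `b`, or the two rays `[0, b]` and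
`[c, W]` point away from each other. Reflecting in the diagonal turns vertical paths into
horizontal ones.
-/

open Set

lemma lt_or_lt_of_disjoint_Icc {a b c d : ℝ} (hab : a ≤ b) (hcd : c ≤ d)
    (h : Disjoint (Icc a b) (Icc c d)) : b < c ∨ d < a := by
  by_contra! hc
  exact disjoint_left.mp h (show max a c ∈ Icc a b from ⟨le_max_left _ _, max_le hab hc.1⟩)
    ⟨le_max_right _ _, max_le hc.2 hcd⟩

lemma disjoint_rays {W a b c d : ℝ} (hab : a ≤ b) (hcd : c ≤ d) (hb : 0 ≤ b) (hc : c ≤ W)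
    (hbc : b < c) {P Q : Set ℝ} (hP : P = Icc a W ∨ P = Icc 0 b) (hQ : Q = Icc c W ∨ Q = Icc 0 d)
    (hPc : Disjoint P (Icc c d)) (hQa : Disjoint Q (Icc a b)) : Disjoint P Q := by
  rcases hP with rfl | rfl
  · exact absurd hPc (not_disjoint_iff.mpr ⟨c, ⟨by linarith, hc⟩, le_rfl, hcd⟩)
  rcases hQ with rfl | rfl
  · exact disjoint_left.mpr fun x hx hx' => by linarith [hx.2, hx'.1]
  · exact absurd hQa (not_disjoint_iff.mpr ⟨b, ⟨hb, by linarith⟩, hab, le_rfl⟩)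

def Dir.isHorizontal : Dir → Bool
  | .left | .right => true
  | .up | .down => false

def Dir.transpose : Dir → Dir
  | .left => .down
  | .down => .left
  | .right => .up
  | .up => .right

def Rect.transpose (r : Rect) : Rect := ⟨r.ymin, r.ymax, r.xmin, r.xmax⟩

namespace Rect

variable {W H : ℝ} {r s : Rect} {d e : Dir}

lemma mem_Icc_ymin_ymax_of_mem_escape {p : ℝ × ℝ} (hd : d.isHorizontal)
    (hp : p ∈ r.escape W H d) : p.2 ∈ Icc r.ymin r.ymax := by
  cases d <;> simp only [Dir.isHorizontal, Bool.false_eq_true] at hd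
  exacts [⟨hp.2.2.1, hp.2.2.2⟩, ⟨hp.2.2.1, hp.2.2.2⟩]

lemma preimage_pts_of_mem_Icc {y : ℝ} (hy : y ∈ Icc r.ymin r.ymax) :
    (·, y) ⁻¹' r.pts = Icc r.xmin r.xmax := by
  ext x; simp [Rect.pts, hy.1, hy.2]

lemma preimage_escape_of_mem_Icc {y : ℝ} (hd : d.isHorizontal) (hy : y ∈ Icc r.ymin r.ymax) :
    (·, y) ⁻¹' r.escape W H d = Icc r.xmin W ∨ (·, y) ⁻¹' r.escape W H d = Icc 0 r.xmax := by
  cases d <;> simp only [Dir.isHorizontal, Bool.false_eq_true] at hd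
  · right; ext x; simp [Rect.escape, hy.1, hy.2]
  · left; ext x; simp [Rect.escape, hy.1, hy.2]

lemma disjoint_escape_of_isHorizontal (hr : r.proper) (hs : s.proper) (hrB : r.inB W H)
    (hsB : s.inB W H) (hrs : Disjoint r.pts s.pts) (hd : d.isHorizontal) (he : e.isHorizontal)
    (hrd : Disjoint (r.escape W H d) s.pts) (hse : Disjoint (s.escape W H e) r.pts) :
    Disjoint (r.escape W H d) (s.escape W H e) := by
  refine disjoint_left.mpr fun p hpr hps => ?_
  have hyr := mem_Icc_ymin_ymax_of_mem_escape hd hpr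
  have hys := mem_Icc_ymin_ymax_of_mem_escape he hps
  wlog hlt : r.xmax < s.xmin generalizing r s d e
  · have hrs' : Disjoint (Icc r.xmin r.xmax) (Icc s.xmin s.xmax) := by
      simpa only [preimage_pts_of_mem_Icc hyr, preimage_pts_of_mem_Icc hys]
        using hrs.preimage (·, p.2)
    exact this hs hr hsB hrB hrs.symm he hd hse hrd hps hpr hys hyr
      ((lt_or_lt_of_disjoint_Icc hr.1 hs.1 hrs').resolve_left hlt)
  have hrays := disjoint_rays (W := W) hr.1 hs.1 (hrB.1.trans hr.1) (hs.1.trans hsB.2.1) hlt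
    (preimage_escape_of_mem_Icc hd hyr) (preimage_escape_of_mem_Icc he hys)
    (by simpa only [preimage_pts_of_mem_Icc hys] using hrd.preimage (·, p.2))
    (by simpa only [preimage_pts_of_mem_Icc hyr] using hse.preimage (·, p.2))
  exact disjoint_left.mp hrays (show p.1 ∈ _ from hpr) hps

lemma proper.transpose (hr : r.proper) : r.transpose.proper := ⟨hr.2, hr.1⟩

lemma inB.transpose (hr : r.inB W H) : r.transpose.inB H W := ⟨hr.2.2.1, hr.2.2.2, hr.1, hr.2.1⟩

lemma preimage_swap_pts : Prod.swap ⁻¹' r.pts = r.transpose.pts := by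
  ext; simp only [pts, transpose, mem_preimage, mem_ofPred_eq, Prod.fst_swap, Prod.snd_swap]; tauto

lemma preimage_swap_escape : Prod.swap ⁻¹' r.escape W H d = r.transpose.escape H W d.transpose := by
  cases d <;> ext <;>
    simp only [escape, transpose, Dir.transpose, mem_preimage, mem_ofPred_eq, Prod.fst_swap,
      Prod.snd_swap] <;> tauto

lemma disjoint_escape_of_isHorizontal_eq_false (hr : r.proper) (hs : s.proper)
    (hrB : r.inB W H) (hsB : s.inB W H) (hrs : Disjoint r.pts s.pts) (hd : d.isHorizontal = false)
    (he : e.isHorizontal = false) (hrd : Disjoint (r.escape W H d) s.pts)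
    (hse : Disjoint (s.escape W H e) r.pts) :
    Disjoint (r.escape W H d) (s.escape W H e) := by
  rw [← disjoint_preimage_iff Prod.swap_surjective, preimage_swap_escape, preimage_swap_escape]
  have hd' : d.transpose.isHorizontal := by cases d <;> simp_all [Dir.transpose, Dir.isHorizontal]
  have he' : e.transpose.isHorizontal := by cases e <;> simp_all [Dir.transpose, Dir.isHorizontal]
  refine disjoint_escape_of_isHorizontal hr.transpose hs.transpose hrB.transpose hsB.transpose
    ?_ hd' he' ?_ ?_ <;>
    simp only [← preimage_swap_pts, ← preimage_swap_escape] <;>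
    exact Disjoint.preimage _ ‹_›

lemma disjoint_escape_of_isHorizontal_eq (hr : r.proper) (hs : s.proper) (hrB : r.inB W H)
    (hsB : s.inB W H) (hrs : Disjoint r.pts s.pts) (hde : d.isHorizontal = e.isHorizontal)
    (hrd : Disjoint (r.escape W H d) s.pts) (hse : Disjoint (s.escape W H e) r.pts) :
    Disjoint (r.escape W H d) (s.escape W H e) := by
  cases hd : d.isHorizontal
  · exact disjoint_escape_of_isHorizontal_eq_false hr hs hrB hsB hrs hd (hde ▸ hd) hrd hse
  · exact disjoint_escape_of_isHorizontal hr hs hrB hsB hrs hd (hde ▸ hd) hrd hse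

end Rect

/-- If the rectangles are pairwise disjoint and every chosen escape path is
disjoint from every other rectangle of the family (a one-level instance routed greedily),
then every point of `B` lies in at most 2 chosen escape paths. -/
theorem one_level_two_approx {n : ℕ} (W H : ℝ) (R : Fin n → Rect)
    (hprop : ∀ i, (R i).proper) (hin : ∀ i, (R i).inB W H)
    (hdisj : ∀ i j, i ≠ j → Disjoint (R i).pts (R j).pts)
    (σ : Fin n → Dir)
    (hfree : ∀ i j, j ≠ i → Disjoint ((R i).escape W H (σ i)) (R j).pts) :
    ∀ p ∈ boundaryBox W H, density W H R Set.univ σ p ≤ 2 := by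
  intro p _
  have hinj : InjOn (fun i => (σ i).isHorizontal) {i | i ∈ univ ∧ p ∈ (R i).escape W H (σ i)} := by
    intro i hi j hj hij
    by_contra hne
    exact disjoint_left.mp (Rect.disjoint_escape_of_isHorizontal_eq (hprop i) (hprop j) (hin i)
      (hin j) (hdisj i j hne) hij (hfree i j (Ne.symm hne)) (hfree j i hne)) hi.2 hj.2
  calc density W H R univ σ p ≤ (univ : Set Bool).ncard :=
        ncard_le_ncard_of_injOn _ (fun _ _ => mem_univ _) hinj
    _ = 2 := by simp
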